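/- Let G be a finite connected simple graph satisfying property (P3) with witness S. Let c ∈ S and x ∈ V(G) with d(c,x) ≥ 2, and let c' ∈ N(c,x) ∩ S. If for every y ∈ V(G) with d(c',y) ≥ 2 either d(c,y) = d(c',y) + 1 or d(x,y) = d(x,c') + d(c',y), then c' ∈ C(c,x); that is, N[v] ⊆ N[c'] for every v ∈ N(c,x). -/

import Mathlib

open SimpleGraph

/-- The closed neighborhood `N[v]` of a vertex. -/
def cNbr {V : Type} (G : SimpleGraph V) (v : V) : Set V := insert v (G.neighborSet v)

/-- `N(c,x)`: the neighbors of `c` lying on a shortest path from `c` to `x`. -/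
def stepSet {V : Type} (G : SimpleGraph V) (c x : V) : Set V :=
  {v | G.Adj c v ∧ G.dist c x = 1 + G.dist v x}

/-- Property (P1): the four-point condition. -/
def P1 {V : Type} (G : SimpleGraph V) : Prop :=
  ∀ c c' x y : V,
    (G.dist c c' + G.dist x y ≤ G.dist c x + G.dist c' y ∧
      G.dist c x + G.dist c' y = G.dist c y + G.dist c' x) ∨
    (G.dist c x + G.dist c' y ≤ G.dist c c' + G.dist x y ∧
      G.dist c c' + G.dist x y = G.dist c y + G.dist c' x) ∨
    (G.dist c y + G.dist c' x ≤ G.dist c c' + G.dist x y ∧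
      G.dist c c' + G.dist x y = G.dist c x + G.dist c' y)

/-- Property (P2). -/
def P2 {V : Type} (G : SimpleGraph V) : Prop :=
  ∀ c x : V, 2 ≤ G.dist c x → ∀ c' ∈ stepSet G c x, ∀ y : V, 2 ≤ G.dist c' y →
    G.dist c y = G.dist c c' + G.dist c' y ∨ G.dist x y = G.dist x c' + G.dist c' y

/-- A (P3)-witness for `G`. -/
def P3Witness {V : Type} (G : SimpleGraph V) (S : Set V) : Prop :=
  (∀ v : V, v ∈ S ∨ ∃ s ∈ S, G.Adj v s) ∧
  ∀ c ∈ S, ∀ x : V, 2 ≤ G.dist c x →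
    ∃ c' ∈ stepSet G c x ∩ S, ∀ y : V, 2 ≤ G.dist c' y →
      G.dist c y = G.dist c c' + G.dist c' y ∨ G.dist x y = G.dist x c' + G.dist c' y

/-- Property (P3). -/
def P3 {V : Type} (G : SimpleGraph V) : Prop := ∃ S : Set V, P3Witness G S

/-- `C(c,x)` relative to a set `S`. -/
def CSet {V : Type} (G : SimpleGraph V) (S : Set V) (c x : V) : Set V :=
  {u | u ∈ stepSet G c x ∩ S ∧ ∀ v ∈ stepSet G c x, cNbr G v ⊆ cNbr G u}

/-- A cut vertex of a connected graph: its removal disconnects the graph. -/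
def IsCutVertex {V : Type} (G : SimpleGraph V) (v : V) : Prop :=
  G.Connected ∧ ¬ (G.induce {u | u ≠ v}).Connected

/-- A set of vertices inducing a connected subgraph with no cut vertex of its own. -/
def NoCutSet {V : Type} (G : SimpleGraph V) (B : Set V) : Prop :=
  (G.induce B).Connected ∧ ∀ v : B, ¬ IsCutVertex (G.induce B) v

/-- A block of `G`: a maximal connected subgraph having no cut vertex of its own. -/
def IsBlock {V : Type} (G : SimpleGraph V) (B : Set V) : Prop :=
  NoCutSet G B ∧ ∀ B' : Set V, B ⊆ B' → NoCutSet G B' → B = B'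

/-- A block graph: a connected graph in which every block is complete. -/
def IsBlockGraph {V : Type} (G : SimpleGraph V) : Prop :=
  G.Connected ∧ ∀ B : Set V, IsBlock G B → ∀ u v, u ∈ B → v ∈ B → u ≠ v → G.Adj u v

/-- The blow-up of a graph `H` by multiplicities `n`. -/
def blowup {W : Type} (H : SimpleGraph W) (n : W → ℕ) :
    SimpleGraph {p : W × ℕ // p.2 < n p.1} where
  Adj p q := p.val ≠ q.val ∧ (p.val.1 = q.val.1 ∨ H.Adj p.val.1 q.val.1)
  symm := by
    constructor
    rintro p q ⟨h1, h2 | h2⟩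
    · exact ⟨fun h => h1 h.symm, Or.inl h2.symm⟩
    · exact ⟨fun h => h1 h.symm, Or.inr h2.symm⟩
  loopless := ⟨by rintro p ⟨h1, -⟩; exact h1 rfl⟩

/-- An extended block graph: a graph isomorphic to the blow-up of the cut vertices of a
finite block graph. -/
def IsExtendedBlockGraph {V : Type} (G : SimpleGraph V) : Prop :=
  ∃ (W : Type) (_ : Finite W) (H : SimpleGraph W) (n : W → ℕ),
    IsBlockGraph H ∧ (∀ v, 1 ≤ n v) ∧ (∀ v, ¬ IsCutVertex H v → n v = 1) ∧
    Nonempty (G ≃g blowup H n)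

/-- `B` is a backbone of `G`. -/
def IsBackbone {V : Type} (G : SimpleGraph V) (B : Set V) : Prop :=
  IsExtendedBlockGraph (G.induce B) ∧
  ∀ c ∈ B, ∀ x : V, 2 ≤ G.dist c x →
    ∃ c' ∈ stepSet G c x ∩ B, ∀ v ∈ stepSet G c x, cNbr G v ⊆ cNbr G c'

/-- A vertebrate graph: a connected graph with a backbone. -/
def IsVertebrateGraph {V : Type} (G : SimpleGraph V) : Prop :=
  G.Connected ∧ ∃ B : Set V, IsBackbone G B

namespace SimpleGraph

variable {V : Type} {G : SimpleGraph V}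

lemma dist_le_one_of_mem_cNbr {v y : V} (hy : y ∈ cNbr G v) : G.dist v y ≤ 1 := by
  rcases hy with rfl | hadj
  · simp
  · exact (dist_eq_one_iff_adj.mpr hadj).le

lemma Connected.two_le_dist_of_notMem_cNbr (hG : G.Connected) {v y : V} (hy : y ∉ cNbr G v) :
    2 ≤ G.dist v y := by
  simp only [cNbr, Set.mem_insert_iff, mem_neighborSet, not_or] at hy
  exact hG.one_lt_dist_of_ne_of_not_adj (Ne.symm hy.1) hy.2

lemma dist_eq_of_mem_stepSet {c x v w : V} (hv : v ∈ stepSet G c x) (hw : w ∈ stepSet G c x) :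
    G.dist v x = G.dist w x := by
  have := hv.2.symm.trans hw.2
  omega

/-- A vertex `y ∈ N[v] \ N[c']` has `d(c,y) ≤ 2` and `d(x,y) ≤ d(x,c') + 1`, which rules out
both alternatives of `h` since `d(c',y) ≥ 2`. -/
lemma Connected.cNbr_subset_of_forall_dist (hG : G.Connected) {c x v c' : V} (hcv : G.Adj c v)
    (hvx : G.dist v x = G.dist c' x)
    (h : ∀ y : V, 2 ≤ G.dist c' y →
      G.dist c y = G.dist c' y + 1 ∨ G.dist x y = G.dist x c' + G.dist c' y) :
    cNbr G v ⊆ cNbr G c' := by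
  intro y hy
  by_contra hy'
  have hvy := dist_le_one_of_mem_cNbr hy
  have hc'y := hG.two_le_dist_of_notMem_cNbr hy'
  have hcy : G.dist c y ≤ 2 := calc
    G.dist c y ≤ G.dist c v + G.dist v y := hG.dist_triangle
    _ ≤ 1 + 1 := by rw [dist_eq_one_iff_adj.mpr hcv]; omega
  have hxy : G.dist x y ≤ G.dist x c' + 1 := calc
    G.dist x y ≤ G.dist x v + G.dist v y := hG.dist_triangle
    _ ≤ G.dist x c' + 1 := by rw [dist_comm, hvx, dist_comm]; omega
  rcases h y hc'y with h | h <;> omega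

end SimpleGraph

theorem mem_CSet_of_forall_dist_general {V : Type} (G : SimpleGraph V)
    (hG : G.Connected) (S : Set V)
    (c : V) (x : V)
    (c' : V) (hc' : c' ∈ stepSet G c x ∩ S)
    (h : ∀ y : V, 2 ≤ G.dist c' y →
      G.dist c y = G.dist c' y + 1 ∨ G.dist x y = G.dist x c' + G.dist c' y) :
    c' ∈ CSet G S c x :=
  ⟨hc', fun _ hv => hG.cNbr_subset_of_forall_dist hv.1 (dist_eq_of_mem_stepSet hv hc'.1) h⟩

/-- If every vertex `y` far from `c'` satisfies one of the two distance
equalities, then `c' ∈ C(c,x)`, i.e. `N[v] ⊆ N[c']` for all `v ∈ N(c,x)`. -/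
theorem mem_CSet_of_forall_dist {V : Type} [Fintype V] (G : SimpleGraph V)
    (hG : G.Connected) (S : Set V) (hS : P3Witness G S)
    (c : V) (hc : c ∈ S) (x : V) (hcx : 2 ≤ G.dist c x)
    (c' : V) (hc' : c' ∈ stepSet G c x ∩ S)
    (h : ∀ y : V, 2 ≤ G.dist c' y →
      G.dist c y = G.dist c' y + 1 ∨ G.dist x y = G.dist x c' + G.dist c' y) :
    c' ∈ CSet G S c x :=
  mem_CSet_of_forall_dist_general G hG S c x c' hc' h
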